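/- arXiv:1605.05969 — 2 statements merged into one kernel-verified Lean document; each statement's English description precedes it below -/
import Mathlib

section
/- Fix θ ∈ (0,1], ρ > 0, α₀ > 0 and set αₖ = α₀/√k for k ≥ 1 (α₀ at k=0). Define βₖ = αₖ / ((1 − (1−θ)αₖ/α_{k−1}) ρ) = α₀ / (ρ(√k − (1−θ)√(k−1))) for k ≥ 1. Then for all integers k ≥ 2, (α_{k−1}/αₖ)βₖ + (1−θ)β_{k+1} − (αₖ/α_{k+1})β_{k+1} − (1−θ)βₖ ≥ 0. -/
/-- With αₖ = α₀/√k (k ≥ 1) and βₖ = α₀/(ρ(√k − (1−θ)√(k−1))),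
    for all k ≥ 2: (α_{k−1}/αₖ)βₖ + (1−θ)β_{k+1} − (αₖ/α_{k+1})β_{k+1} − (1−θ)βₖ ≥ 0. -/
theorem stmt_8 (θ ρ α₀ : ℝ) (hθ0 : 0 < θ) (hθ1 : θ ≤ 1) (hρ : 0 < ρ) (hα₀ : 0 < α₀)
    (α β : ℕ → ℝ)
    (hα : ∀ k : ℕ, 1 ≤ k → α k = α₀ / Real.sqrt k)
    (hβ : ∀ k : ℕ, 1 ≤ k →
      β k = α₀ / (ρ * (Real.sqrt k - (1 - θ) * Real.sqrt ((k : ℝ) - 1))))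
    (k : ℕ) (hk : 2 ≤ k) :
    α (k - 1) / α k * β k + (1 - θ) * β (k + 1)
      - α k / α (k + 1) * β (k + 1) - (1 - θ) * β k ≥ 0 := by
  have hk1 : 1 ≤ k := le_trans (by norm_num) hk
  have hcast : ((k - 1 : ℕ) : ℝ) = (k : ℝ) - 1 := by
    push_cast [Nat.cast_sub hk1]; ring
  have hcast2 : ((k + 1 : ℕ) : ℝ) - 1 = (k : ℝ) := by push_cast; ring
  set s := Real.sqrt ((k : ℝ) - 1) with hs
  set t := Real.sqrt (k : ℝ) with ht
  set u := Real.sqrt ((k : ℝ) + 1) with hu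
  have hks : (1 : ℝ) ≤ (k : ℝ) - 1 := by
    have : (2 : ℝ) ≤ (k : ℝ) := by exact_mod_cast hk
    linarith
  have hspos : 0 < s := Real.sqrt_pos.mpr (by linarith)
  have hst : s < t := by
    apply Real.sqrt_lt_sqrt (by linarith); linarith
  have htu : t < u := by
    apply Real.sqrt_lt_sqrt (by positivity); linarith
  have htpos : 0 < t := lt_trans hspos hst
  have hupos : 0 < u := lt_trans htpos htu
  have hDk : 0 < t - (1 - θ) * s := by nlinarith
  have hDk1 : 0 < u - (1 - θ) * t := by nlinarith
  rw [hα (k - 1) (by omega), hα k hk1, hα (k + 1) (by omega), hβ k hk1,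
    hβ (k + 1) (by omega), hcast]
  push_cast
  have h3 : (k : ℝ) + 1 - 1 = (k : ℝ) := by ring
  rw [h3, ← hs, ← ht, ← hu]
  have key : α₀ / s / (α₀ / t) * (α₀ / (ρ * (t - (1 - θ) * s)))
      + (1 - θ) * (α₀ / (ρ * (u - (1 - θ) * t)))
      - α₀ / t / (α₀ / u) * (α₀ / (ρ * (u - (1 - θ) * t)))
      - (1 - θ) * (α₀ / (ρ * (t - (1 - θ) * s)))
      = α₀ / ρ * (1 / s - 1 / t) := by
    field_simp
    have h1 : t - s + s * θ ≠ 0 := by nlinarith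
    have h2 : -t + t * θ + u ≠ 0 := by nlinarith
    linear_combination t * mul_inv_cancel₀ h1 - s * mul_inv_cancel₀ h2
  rw [ge_iff_le, key]
  apply mul_nonneg (by positivity)
  have : 1 / t ≤ 1 / s := one_div_le_one_div_of_le hspos hst.le
  linarith
end

section
/- Suppose a random vector ŵ = (x̂, ŷ, λ̂) satisfies, for every feasible w = (x, y, λ) (x ∈ 𝒳, y ∈ 𝒴, Ax + By = b, possibly depending on ŵ), 𝔼[Φ(x̂,ŷ) − Φ(x,y) + (ŵ − w)ᵀ H(w)] ≤ 𝔼[h(w)], where H(w) = (−Aᵀλ, −Bᵀλ, Ax+By−b) and h is continuous. Then for any γ > 0 and any optimal (x*, y*): 𝔼[Φ(x̂,ŷ) − Φ(x*,y*) + γ‖Ax̂ + Bŷ − b‖] ≤ sup_{‖λ‖ ≤ γ} h(x*, y*, λ). -/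
open Matrix MeasureTheory

/-- If a random ŵ = (x̂, ŷ, λ̂) satisfies
    𝔼[Φ(x̂,ŷ) − Φ(x,y) + (ŵ−w)ᵀH(w)] ≤ 𝔼[h(w)] for every feasible w (possibly random),
    then for any γ > 0 and optimal (x*,y*):
    𝔼[Φ(x̂,ŷ) − Φ(x*,y*) + γ‖Ax̂ + Bŷ − b‖] ≤ sup_{‖λ‖≤γ} h(x*,y*,λ). -/
theorem stmt_14 (p nx ny : ℕ)
    (A : Matrix (Fin p) (Fin nx) ℝ) (B : Matrix (Fin p) (Fin ny) ℝ) (b : Fin p → ℝ)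
    (X : Set (Fin nx → ℝ)) (Y : Set (Fin ny → ℝ))
    (Φ : (Fin nx → ℝ) × (Fin ny → ℝ) → ℝ) (hΦ : ConvexOn ℝ Set.univ Φ)
    (h : (Fin nx → ℝ) → (Fin ny → ℝ) → (Fin p → ℝ) → ℝ)
    (hcont : Continuous fun q : (Fin nx → ℝ) × (Fin ny → ℝ) × (Fin p → ℝ) =>
      h q.1 q.2.1 q.2.2)
    (Ω : Type) [MeasurableSpace Ω] (μ : Measure Ω) [IsProbabilityMeasure μ]
    (xh : Ω → Fin nx → ℝ) (yh : Ω → Fin ny → ℝ) (lh : Ω → Fin p → ℝ)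
    (hmain : ∀ (x : Ω → Fin nx → ℝ) (y : Ω → Fin ny → ℝ) (l : Ω → Fin p → ℝ),
      (∀ ω, x ω ∈ X ∧ y ω ∈ Y ∧ A.mulVec (x ω) + B.mulVec (y ω) = b) →
      ∫ ω, (Φ (xh ω, yh ω) - Φ (x ω, y ω)
          + ((xh ω - x ω) ⬝ᵥ (-(Aᵀ.mulVec (l ω)))
            + (yh ω - y ω) ⬝ᵥ (-(Bᵀ.mulVec (l ω)))
            + (lh ω - l ω) ⬝ᵥ (A.mulVec (x ω) + B.mulVec (y ω) - b))) ∂μ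
        ≤ ∫ ω, h (x ω) (y ω) (l ω) ∂μ)
    (γ : ℝ) (hγ : 0 < γ)
    (xs : Fin nx → ℝ) (ys : Fin ny → ℝ) (hxs : xs ∈ X) (hys : ys ∈ Y)
    (hfeas : A.mulVec xs + B.mulVec ys = b)
    (hopt : ∀ x ∈ X, ∀ y ∈ Y, A.mulVec x + B.mulVec y = b → Φ (xs, ys) ≤ Φ (x, y)) :
    ∫ ω, (Φ (xh ω, yh ω) - Φ (xs, ys)
        + γ * Real.sqrt ((A.mulVec (xh ω) + B.mulVec (yh ω) - b) ⬝ᵥ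
            (A.mulVec (xh ω) + B.mulVec (yh ω) - b))) ∂μ
      ≤ sSup {c : ℝ | ∃ l : Fin p → ℝ, Real.sqrt (l ⬝ᵥ l) ≤ γ ∧ c = h xs ys l} := by
  classical
  have hγ0 : (0:ℝ) ≤ γ := hγ.le
  set S : Set ℝ := {c : ℝ | ∃ l : Fin p → ℝ, Real.sqrt (l ⬝ᵥ l) ≤ γ ∧ c = h xs ys l}
    with hSdef
  set r : Ω → Fin p → ℝ := fun ω => A.mulVec (xh ω) + B.mulVec (yh ω) - b with hrdef
  -- basic facts about dot products
  have hdot : ∀ v : Fin p → ℝ, 0 ≤ v ⬝ᵥ v := fun v =>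
    Finset.sum_nonneg fun i _ => mul_self_nonneg _
  have habs : ∀ (v : Fin p → ℝ) (i : Fin p), |v i| ≤ Real.sqrt (v ⬝ᵥ v) := by
    intro v i
    have h1 : v i * v i ≤ v ⬝ᵥ v :=
      Finset.single_le_sum (fun j _ => mul_self_nonneg (v j)) (Finset.mem_univ i)
    calc |v i| = Real.sqrt (v i * v i) := (Real.sqrt_mul_self_eq_abs _).symm
      _ ≤ _ := Real.sqrt_le_sqrt h1
  have hcontdot : Continuous fun v : Fin p → ℝ => v ⬝ᵥ v := by
    simp only [dotProduct]
    exact continuous_finset_sum _ fun i _ => (continuous_apply i).mul (continuous_apply i)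
  -- the ball
  set K : Set (Fin p → ℝ) := {l : Fin p → ℝ | Real.sqrt (l ⬝ᵥ l) ≤ γ} with hKdef
  have hKcompact : IsCompact K := by
    refine IsCompact.of_isClosed_subset (isCompact_closedBall 0 γ) ?_ ?_
    · exact IsClosed.preimage (Real.continuous_sqrt.comp hcontdot) isClosed_Iic
    · intro l hl
      rw [Metric.mem_closedBall, dist_zero_right]
      rw [pi_norm_le_iff_of_nonneg hγ0]
      intro i
      exact le_trans (habs l i) hl
  have hconth : Continuous fun l : Fin p → ℝ => h xs ys l := by
    have : Continuous fun l : Fin p → ℝ =>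
        ((xs, ys, l) : (Fin nx → ℝ) × (Fin ny → ℝ) × (Fin p → ℝ)) :=
      continuous_const.prodMk (continuous_const.prodMk continuous_id)
    exact hcont.comp this
  have hSK : S = (fun l => h xs ys l) '' K := by
    ext c
    constructor
    · rintro ⟨l, hl, rfl⟩; exact ⟨l, hl, rfl⟩
    · rintro ⟨l, hl, rfl⟩; exact ⟨l, hl, rfl⟩
  have hScompact : IsCompact S := hSK ▸ hKcompact.image hconth
  have hSbdd : BddAbove S := hScompact.bddAbove
  have hmem : ∀ l : Fin p → ℝ, Real.sqrt (l ⬝ᵥ l) ≤ γ → h xs ys l ≤ sSup S :=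
    fun l hl => le_csSup hSbdd ⟨l, hl, rfl⟩
  -- the dual variable choice
  set g : (Fin p → ℝ) → (Fin p → ℝ) :=
    fun v => if v = 0 then 0 else (-γ / Real.sqrt (v ⬝ᵥ v)) • v with hgdef
  have hgK : ∀ v : Fin p → ℝ, Real.sqrt (g v ⬝ᵥ g v) ≤ γ := by
    intro v
    by_cases hv : v = 0
    · simp [hgdef, hv, hγ0]
    · have hvpos : 0 < v ⬝ᵥ v := lt_of_le_of_ne (hdot v)
        (fun hc => hv (dotProduct_self_eq_zero.mp hc.symm))
    --
      have hs : Real.sqrt (v ⬝ᵥ v) > 0 := Real.sqrt_pos.mpr hvpos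
      simp only [hgdef, if_neg hv, smul_dotProduct, dotProduct_smul, smul_eq_mul]
      have hss : Real.sqrt (v ⬝ᵥ v) * Real.sqrt (v ⬝ᵥ v) = v ⬝ᵥ v :=
        Real.mul_self_sqrt hvpos.le
      have : -γ / Real.sqrt (v ⬝ᵥ v) * (-γ / Real.sqrt (v ⬝ᵥ v) * (v ⬝ᵥ v)) = γ ^ 2 := by
        field_simp
        nlinarith [hss]
      rw [this, Real.sqrt_sq hγ0]
  have hgdot : ∀ v : Fin p → ℝ, -(g v ⬝ᵥ v) = γ * Real.sqrt (v ⬝ᵥ v) := by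
    intro v
    by_cases hv : v = 0
    · simp [hgdef, hv]
    · simp only [hgdef, if_neg hv, smul_dotProduct, smul_eq_mul]
      rw [div_mul_eq_mul_div, ← neg_div, neg_mul, neg_neg, mul_div_assoc, Real.div_sqrt]
  -- the key dot-product identity
  have H1 : ∀ (l : Fin p → ℝ) (ω : Ω),
      (xh ω - xs) ⬝ᵥ (-(Aᵀ.mulVec l)) + (yh ω - ys) ⬝ᵥ (-(Bᵀ.mulVec l))
        + (lh ω - l) ⬝ᵥ (A.mulVec xs + B.mulVec ys - b) = -(l ⬝ᵥ r ω) := by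
    intro l ω
    rw [hfeas, sub_self, dotProduct_zero, add_zero]
    have hA : ∀ v : Fin nx → ℝ, v ⬝ᵥ (Aᵀ.mulVec l) = l ⬝ᵥ A.mulVec v := by
      intro v
      rw [Matrix.dotProduct_mulVec, Matrix.vecMul_transpose, dotProduct_comm]
    have hB : ∀ v : Fin ny → ℝ, v ⬝ᵥ (Bᵀ.mulVec l) = l ⬝ᵥ B.mulVec v := by
      intro v
      rw [Matrix.dotProduct_mulVec, Matrix.vecMul_transpose, dotProduct_comm]
    rw [dotProduct_neg, dotProduct_neg, hA, hB]
    have hb : l ⬝ᵥ b = l ⬝ᵥ A.mulVec xs + l ⬝ᵥ B.mulVec ys := by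
      rw [← hfeas, dotProduct_add]
    have hrω : l ⬝ᵥ r ω
        = l ⬝ᵥ A.mulVec (xh ω) + l ⬝ᵥ B.mulVec (yh ω) - l ⬝ᵥ b := by
      simp only [hrdef]
      rw [dotProduct_sub, dotProduct_add]
    rw [Matrix.mulVec_sub, Matrix.mulVec_sub, dotProduct_sub, dotProduct_sub, hrω, hb]
    ring
  -- key inequality from hmain
  have key : ∀ l : Ω → Fin p → ℝ,
      ∫ ω, (Φ (xh ω, yh ω) - Φ (xs, ys) + -(l ω ⬝ᵥ r ω)) ∂μ
        ≤ ∫ ω, h xs ys (l ω) ∂μ := by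
    intro l
    have hm := hmain (fun _ => xs) (fun _ => ys) l (fun ω => ⟨hxs, hys, hfeas⟩)
    have heq : (fun ω => Φ (xh ω, yh ω) - Φ (xs, ys)
        + ((xh ω - xs) ⬝ᵥ (-(Aᵀ.mulVec (l ω))) + (yh ω - ys) ⬝ᵥ (-(Bᵀ.mulVec (l ω)))
          + (lh ω - l ω) ⬝ᵥ (A.mulVec xs + B.mulVec ys - b)))
        = fun ω => Φ (xh ω, yh ω) - Φ (xs, ys) + -(l ω ⬝ᵥ r ω) := by
      funext ω; rw [H1]
    rw [heq] at hm
    exact hm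
  -- the specific instance
  have key2 : ∫ ω, (Φ (xh ω, yh ω) - Φ (xs, ys)
        + γ * Real.sqrt (r ω ⬝ᵥ r ω)) ∂μ
      ≤ ∫ ω, h xs ys (g (r ω)) ∂μ := by
    have := key (fun ω => g (r ω))
    have heq : (fun ω => Φ (xh ω, yh ω) - Φ (xs, ys) + -(g (r ω) ⬝ᵥ r ω))
        = fun ω => Φ (xh ω, yh ω) - Φ (xs, ys) + γ * Real.sqrt (r ω ⬝ᵥ r ω) := by
      funext ω; rw [hgdot]
    rw [heq] at this
    exact this
  have hgoal : ∫ ω, (Φ (xh ω, yh ω) - Φ (xs, ys)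
        + γ * Real.sqrt ((A.mulVec (xh ω) + B.mulVec (yh ω) - b) ⬝ᵥ
            (A.mulVec (xh ω) + B.mulVec (yh ω) - b))) ∂μ
      = ∫ ω, (Φ (xh ω, yh ω) - Φ (xs, ys) + γ * Real.sqrt (r ω ⬝ᵥ r ω)) ∂μ := rfl
  rw [hgoal]
  set f : Ω → ℝ := fun ω => h xs ys (g (r ω)) with hfdef
  by_cases hf : Integrable f μ
  · calc ∫ ω, (Φ (xh ω, yh ω) - Φ (xs, ys) + γ * Real.sqrt (r ω ⬝ᵥ r ω)) ∂μ
        ≤ ∫ ω, f ω ∂μ := key2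
      _ ≤ ∫ _ω, sSup S ∂μ := integral_mono hf (integrable_const _)
          (fun ω => hmem _ (hgK (r ω)))
      _ = sSup S := by simp
  · -- non-integrable case
    -- there is a constant dual in the ball with non-integrable pairing
    have hex : ∃ l₀ : Fin p → ℝ, Real.sqrt (l₀ ⬝ᵥ l₀) ≤ γ ∧
        ¬ Integrable (fun ω => Φ (xh ω, yh ω) - Φ (xs, ys) + -(l₀ ⬝ᵥ r ω)) μ := by
      by_contra hcon
      push_neg at hcon
      have hzero : Real.sqrt ((0 : Fin p → ℝ) ⬝ᵥ 0) ≤ γ := by simp [hγ0]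
      have hΦd : Integrable (fun ω => Φ (xh ω, yh ω) - Φ (xs, ys)) μ := by
        have := hcon 0 hzero
        have heq : (fun ω => Φ (xh ω, yh ω) - Φ (xs, ys) + -((0 : Fin p → ℝ) ⬝ᵥ r ω))
            = fun ω => Φ (xh ω, yh ω) - Φ (xs, ys) := by
          funext ω; simp
        rwa [heq] at this
      have hri : ∀ i : Fin p, Integrable (fun ω => r ω i) μ := by
        intro i
        have hsingle : Real.sqrt ((Pi.single i γ : Fin p → ℝ) ⬝ᵥ Pi.single i γ) ≤ γ := by
          rw [single_dotProduct, Pi.single_eq_same, Real.sqrt_mul_self_eq_abs,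
            abs_of_nonneg hγ0]
        have h1 := hcon (Pi.single i γ) hsingle
        have h2 := (h1.sub hΦd).neg.const_mul γ⁻¹
        refine h2.congr (Filter.Eventually.of_forall fun ω => ?_)
        simp only [single_dotProduct, Pi.neg_apply, Pi.sub_apply]
        field_simp
        ring
      have haer : AEMeasurable r μ := by
        have choice : ∀ i : Fin p, AEMeasurable (fun ω => r ω i) μ :=
          fun i => (hri i).aemeasurable
        refine ⟨fun ω i => (choice i).mk _ ω, measurable_pi_iff.mpr
          (fun i => (choice i).measurable_mk), ?_⟩
        have := MeasureTheory.ae_all_iff.mpr fun i => (choice i).ae_eq_mk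
        filter_upwards [this] with ω hω
        funext i
        exact hω i
      have hgmeas : Measurable g := by
        rw [measurable_pi_iff]
        intro i
        have heq : (fun v : Fin p → ℝ => g v i)
            = fun v => if v = 0 then 0 else (-γ / Real.sqrt (v ⬝ᵥ v)) * v i := by
          funext v
          by_cases hv : v = 0 <;> simp [hgdef, hv]
        rw [heq]
        refine Measurable.ite ?_ measurable_const ?_
        · exact measurableSet_eq
        · exact (measurable_const.div
            (Real.continuous_sqrt.comp hcontdot).measurable).mul (measurable_pi_apply i)
      have hfm : AEStronglyMeasurable f μ := by
        have : Measurable fun v : Fin p → ℝ => h xs ys (g v) :=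
          hconth.measurable.comp hgmeas
        exact (this.comp_aemeasurable haer).aestronglyMeasurable
      obtain ⟨C, hC⟩ := hScompact.isBounded.subset_closedBall 0
      have hfint : Integrable f μ := by
        refine Integrable.mono' (integrable_const C) hfm
          (Filter.Eventually.of_forall fun ω => ?_)
        have hmemS : f ω ∈ S := ⟨g (r ω), hgK (r ω), rfl⟩
        have := hC hmemS
        rwa [Metric.mem_closedBall, Real.dist_eq, sub_zero] at this
      exact hf hfint
    obtain ⟨l₀, hl₀, hni⟩ := hex
    have hk := key (fun _ => l₀)
    rw [integral_undef hni] at hk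
    have hrhs : ∫ _ω, h xs ys l₀ ∂μ = h xs ys l₀ := by simp
    rw [hrhs] at hk
    have h0 : (0:ℝ) ≤ sSup S := le_trans hk (hmem l₀ hl₀)
    have hfzero : ∫ ω, f ω ∂μ = 0 := integral_undef hf
    calc ∫ ω, (Φ (xh ω, yh ω) - Φ (xs, ys) + γ * Real.sqrt (r ω ⬝ᵥ r ω)) ∂μ
        ≤ ∫ ω, f ω ∂μ := key2
      _ = 0 := hfzero
      _ ≤ sSup S := h0
end
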